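/- Under the scaling assumption λ(N) = λN² + o(N²) and μ(N) = μN + o(N) with λ, μ > 0 fixed constants, there exists a constant C > 0 such that for every integer N ≥ 2 and every particle configuration A : ℤ/Nℤ → {0,1}, | L^N(A) − (μ(N)/N) Σ_{i∈ℤ/Nℤ} [ (A_i + A_{i+1})/2 − A_i A_{i+1} ] Δψ(i/N) − (λ(N)/N) Σ_{i∈ℤ/Nℤ} (A_i − A_{i+1}) Δψ(i/N) | ≤ C/N. -/

import Mathlib

/-! Put `x = Δψ(i/N)/N`. A periodic `C¹` function is Lipschitz, so `|x| ≤ M/N²`. The first-order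
parts `±x` of `exp(±x) - 1` reproduce the two subtracted sums exactly (an identity in `A_i`,
`A_{i+1}`), so each bond leaves only the remainders `λ_ab (eˣ - 1 - x)` and `λ_ba (e⁻ˣ - 1 + x)`,
each `O(N²) · O(N⁻⁴)`. Summing over the `N` bonds gives `O(N⁻¹)`. -/

open Real

theorem Real.abs_exp_sub_one_sub_id_le_sq_mul_exp_abs (x : ℝ) :
    |exp x - 1 - x| ≤ x ^ 2 * exp |x| := by
  have h := Complex.norm_exp_sub_sum_le_norm_mul_exp (x : ℂ) 2
  simp only [Finset.sum_range_succ, Finset.sum_range_zero] at h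
  norm_num at h
  rw [sub_sub, ← Real.norm_eq_abs]
  exact_mod_cast h

theorem Function.Periodic.exists_abs_sub_le_mul {f : ℝ → ℝ} {c : ℝ} (hf : Function.Periodic f c)
    (hc : c ≠ 0) (hf1 : ContDiff ℝ 1 f) : ∃ M, ∀ a b, |f b - f a| ≤ M * |b - a| := by
  have hderiv : Function.Periodic (deriv f) c := fun x => by
    rw [← deriv_comp_add_const]; exact congrArg (deriv · x) (funext hf)
  obtain ⟨M, hM⟩ := isBounded_iff_forall_norm_le.1
    (hderiv.isBounded_of_continuous hc (hf1.continuous_deriv le_rfl))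
  exact ⟨M, fun a b => convex_univ.norm_image_sub_le_of_norm_deriv_le
    (fun x _ => (hf1.differentiable one_ne_zero).differentiableAt) (fun x _ => hM _ ⟨x, rfl⟩)
    trivial trivial⟩

lemma abs_mul_mul_mul_le_of_mem_Icc {a r s t : ℝ} (ha : 0 ≤ a) (hs : s ∈ Set.Icc (0 : ℝ) 1)
    (ht : t ∈ Set.Icc (0 : ℝ) 1) : |a * r * s * t| ≤ a * |r| := by
  obtain ⟨hs0, hs1⟩ := hs
  obtain ⟨ht0, ht1⟩ := ht
  rw [abs_mul, abs_mul, abs_mul, abs_of_nonneg ha, abs_of_nonneg hs0, abs_of_nonneg ht0]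
  calc a * |r| * s * t ≤ a * |r| * 1 * 1 := by gcongr
    _ = a * |r| := by ring

lemma bond_rate_sub_first_order_eq {n : ℝ} (hn : n ≠ 0) (a b D A A' : ℝ) :
    a * (exp (D / n) - 1) * A * (1 - A') + b * (exp (-D / n) - 1) * (1 - A) * A'
        - (a - b) / n * (((A + A') / 2 - A * A') * D) - (a + b) / 2 / n * ((A - A') * D)
      = a * (exp (D / n) - 1 - D / n) * A * (1 - A')
        + b * (exp (-D / n) - 1 - -D / n) * (1 - A) * A' := by
  field_simp
  ring

lemma abs_bond_rate_sub_first_order_le {n : ℝ} (hn : n ≠ 0) {a b : ℝ} (ha : 0 ≤ a) (hb : 0 ≤ b)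
    (D : ℝ) {A A' : ℝ} (hA : A ∈ Set.Icc (0 : ℝ) 1) (hA' : A' ∈ Set.Icc (0 : ℝ) 1) :
    |a * (exp (D / n) - 1) * A * (1 - A') + b * (exp (-D / n) - 1) * (1 - A) * A'
        - (a - b) / n * (((A + A') / 2 - A * A') * D) - (a + b) / 2 / n * ((A - A') * D)|
      ≤ (a + b) * ((D / n) ^ 2 * exp |D / n|) := by
  have hcompl : ∀ {t : ℝ}, t ∈ Set.Icc (0 : ℝ) 1 → 1 - t ∈ Set.Icc (0 : ℝ) 1 := fun ht =>
    ⟨by linarith [ht.2], by linarith [ht.1]⟩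
  have hneg : (-D / n) ^ 2 * exp |-D / n| = (D / n) ^ 2 * exp |D / n| := by
    rw [neg_div, abs_neg, neg_sq]
  rw [bond_rate_sub_first_order_eq hn]
  calc _ ≤ a * |exp (D / n) - 1 - D / n| + b * |exp (-D / n) - 1 - -D / n| :=
        (abs_add_le _ _).trans (add_le_add (abs_mul_mul_mul_le_of_mem_Icc ha hA (hcompl hA'))
          (abs_mul_mul_mul_le_of_mem_Icc hb (hcompl hA) hA'))
    _ ≤ a * ((D / n) ^ 2 * exp |D / n|) + b * ((-D / n) ^ 2 * exp |-D / n|) := by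
        gcongr <;> exact abs_exp_sub_one_sub_id_le_sq_mul_exp_abs _
    _ = (a + b) * ((D / n) ^ 2 * exp |D / n|) := by rw [hneg]; ring

lemma sq_mul_exp_abs_le {x m M : ℝ} (hx : |x| ≤ m) (hm : m ≤ M) :
    x ^ 2 * exp |x| ≤ m ^ 2 * exp M := by
  rw [← sq_abs]
  gcongr
  exact hx.trans hm

lemma abs_generator_sub_first_order_le {ψ : ℝ → ℝ} {M : ℝ} (hψ : ∀ x y, |ψ y - ψ x| ≤ M * |y - x|)
    (N : ℕ) [NeZero N] {a b : ℝ} (ha : 0 ≤ a) (hb : 0 ≤ b) (A : ZMod N → ℝ)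
    (hA : ∀ i, A i ∈ Set.Icc (0 : ℝ) 1) :
    |(∑ i : ZMod N,
          (a * (exp ((ψ (((i.val : ℝ) + 1) / N) - ψ ((i.val : ℝ) / N)) / N) - 1)
              * A i * (1 - A (i + 1))
            + b * (exp (-(ψ (((i.val : ℝ) + 1) / N) - ψ ((i.val : ℝ) / N)) / N) - 1)
              * (1 - A i) * A (i + 1)))
        - ((a - b) / N) *
            ∑ i : ZMod N, ((A i + A (i + 1)) / 2 - A i * A (i + 1))
              * (ψ (((i.val : ℝ) + 1) / N) - ψ ((i.val : ℝ) / N))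
        - ((a + b) / 2 / N) *
            ∑ i : ZMod N, (A i - A (i + 1))
              * (ψ (((i.val : ℝ) + 1) / N) - ψ ((i.val : ℝ) / N))|
      ≤ (a + b) * (M ^ 2 * exp M) / N ^ 3 := by
  have hN : (1 : ℝ) ≤ N := Nat.one_le_cast.2 NeZero.one_le
  have hN0 : (0 : ℝ) < N := by linarith
  have hM : 0 ≤ M := by simpa using (abs_nonneg _).trans (hψ 0 1)
  have hstep : ∀ x : ℝ, |(ψ ((x + 1) / N) - ψ (x / N)) / N| ≤ M / N ^ 2 := fun x => by
    have h := hψ (x / N) ((x + 1) / N)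
    rw [show (x + 1) / N - x / N = 1 / N by ring, abs_of_pos (one_div_pos.2 hN0)] at h
    rw [abs_div, abs_of_pos hN0, div_le_iff₀ hN0]
    calc _ ≤ M * (1 / N) := h
      _ = M / N ^ 2 * N := by field_simp
  have hbond : ∀ x : ℝ, ((ψ ((x + 1) / N) - ψ (x / N)) / N) ^ 2
      * exp |(ψ ((x + 1) / N) - ψ (x / N)) / N| ≤ (M / N ^ 2) ^ 2 * exp M := fun x =>
    sq_mul_exp_abs_le (hstep x) (div_le_self hM (one_le_pow₀ hN))
  rw [Finset.mul_sum, Finset.mul_sum, ← Finset.sum_sub_distrib, ← Finset.sum_sub_distrib]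
  calc _ ≤ ∑ i : ZMod N, (a + b) * ((M / N ^ 2) ^ 2 * exp M) :=
        (Finset.abs_sum_le_sum_abs _ _).trans (Finset.sum_le_sum fun i _ =>
          (abs_bond_rate_sub_first_order_le hN0.ne' ha hb _ (hA i) (hA (i + 1))).trans
            (mul_le_mul_of_nonneg_left (hbond _) (add_nonneg ha hb)))
    _ = (a + b) * (M ^ 2 * exp M) / N ^ 3 := by
        rw [Finset.sum_const, Finset.card_univ, ZMod.card, nsmul_eq_mul]
        field_simp

theorem stmt_4_general (ψ : ℝ → ℝ) (hper : Function.Periodic ψ 1) (hsm : ContDiff ℝ 2 ψ)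
    (lab lba : ℕ → ℝ) (hlab : ∀ N, 0 < lab N) (hlba : ∀ N, 0 < lba N)
    (lam : ℝ)
    (hscale1 : (fun N : ℕ => (lab N + lba N) / 2 - lam * (N : ℝ) ^ 2) =o[Filter.atTop]
      fun N : ℕ => (N : ℝ) ^ 2) :
    ∃ C > 0, ∀ N : ℕ, 2 ≤ N → ∀ [NeZero N], ∀ A : ZMod N → ℝ, (∀ i, A i = 0 ∨ A i = 1) →
      |(∑ i : ZMod N,
          (lab N * (Real.exp ((ψ (((i.val : ℝ) + 1) / N) - ψ ((i.val : ℝ) / N)) / N) - 1)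
              * A i * (1 - A (i + 1))
            + lba N * (Real.exp (-(ψ (((i.val : ℝ) + 1) / N) - ψ ((i.val : ℝ) / N)) / N) - 1)
              * (1 - A i) * A (i + 1)))
        - ((lab N - lba N) / N) *
            ∑ i : ZMod N, ((A i + A (i + 1)) / 2 - A i * A (i + 1))
              * (ψ (((i.val : ℝ) + 1) / N) - ψ ((i.val : ℝ) / N))
        - ((lab N + lba N) / 2 / N) *
            ∑ i : ZMod N, (A i - A (i + 1))
              * (ψ (((i.val : ℝ) + 1) / N) - ψ ((i.val : ℝ) / N))| ≤ C / (N : ℝ) := by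
  obtain ⟨M, hψ⟩ := hper.exists_abs_sub_le_mul one_ne_zero (hsm.of_le (by norm_num))
  obtain ⟨K, hK0, hK⟩ := Asymptotics.bound_of_isBigO_nat_atTop hscale1.isBigO
  refine ⟨2 * (K + |lam|) * ((M ^ 2 + 1) * exp M), by positivity, fun N hN _ A hA => ?_⟩
  have hN0 : (0 : ℝ) < N := Nat.cast_pos.2 (by omega)
  have hrates : lab N + lba N ≤ 2 * (K + |lam|) * N ^ 2 := by
    have h := hK (x := N) (by positivity)
    rw [Real.norm_of_nonneg (sq_nonneg (N : ℝ)), Real.norm_eq_abs] at h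
    nlinarith [le_abs_self ((lab N + lba N) / 2 - lam * N ^ 2),
      mul_le_mul_of_nonneg_right (le_abs_self lam) (sq_nonneg (N : ℝ))]
  have hA' : ∀ i, A i ∈ Set.Icc (0 : ℝ) 1 := fun i => by rcases hA i with h | h <;> simp [h]
  calc _ ≤ (lab N + lba N) * (M ^ 2 * exp M) / N ^ 3 :=
        abs_generator_sub_first_order_le hψ N (hlab N).le (hlba N).le A hA'
    _ ≤ 2 * (K + |lam|) * N ^ 2 * ((M ^ 2 + 1) * exp M) / N ^ 3 := by
        gcongr
        linarith
    _ = 2 * (K + |lam|) * ((M ^ 2 + 1) * exp M) / N := by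
        field_simp

/-- Under the scaling `λ(N) = λN² + o(N²)`, `μ(N) = μN + o(N)`,
there is `C > 0` such that for all `N ≥ 2` and all configurations `A`,
`|L^N(A) - (μ(N)/N) Σᵢ [(Aᵢ+Aᵢ₊₁)/2 - AᵢAᵢ₊₁] Δψ(i/N)
  - (λ(N)/N) Σᵢ (Aᵢ-Aᵢ₊₁) Δψ(i/N)| ≤ C/N`. -/
theorem stmt_4 (ψ : ℝ → ℝ) (hper : Function.Periodic ψ 1) (hsm : ContDiff ℝ 2 ψ)
    (lab lba : ℕ → ℝ) (hlab : ∀ N, 0 < lab N) (hlba : ∀ N, 0 < lba N)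
    (lam mu : ℝ) (hlam : 0 < lam) (hmu : 0 < mu)
    (hscale1 : (fun N : ℕ => (lab N + lba N) / 2 - lam * (N : ℝ) ^ 2) =o[Filter.atTop]
      fun N : ℕ => (N : ℝ) ^ 2)
    (hscale2 : (fun N : ℕ => (lab N - lba N) - mu * (N : ℝ)) =o[Filter.atTop]
      fun N : ℕ => (N : ℝ)) :
    ∃ C > 0, ∀ N : ℕ, 2 ≤ N → ∀ [NeZero N], ∀ A : ZMod N → ℝ, (∀ i, A i = 0 ∨ A i = 1) →
      |(∑ i : ZMod N,
          (lab N * (Real.exp ((ψ (((i.val : ℝ) + 1) / N) - ψ ((i.val : ℝ) / N)) / N) - 1)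
              * A i * (1 - A (i + 1))
            + lba N * (Real.exp (-(ψ (((i.val : ℝ) + 1) / N) - ψ ((i.val : ℝ) / N)) / N) - 1)
              * (1 - A i) * A (i + 1)))
        - ((lab N - lba N) / N) *
            ∑ i : ZMod N, ((A i + A (i + 1)) / 2 - A i * A (i + 1))
              * (ψ (((i.val : ℝ) + 1) / N) - ψ ((i.val : ℝ) / N))
        - ((lab N + lba N) / 2 / N) *
            ∑ i : ZMod N, (A i - A (i + 1))
              * (ψ (((i.val : ℝ) + 1) / N) - ψ ((i.val : ℝ) / N))| ≤ C / (N : ℝ) :=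
  stmt_4_general ψ hper hsm lab lba hlab hlba lam hscale1
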